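/- arXiv:1604.05645 — 2 statements merged into one kernel-verified Lean document; each statement's English description precedes it below -/
import Mathlib

section
/- Let (E, μ) be a σ-finite measure space, N ≥ 1, and let F_{jk} : E → ℂ for j, k ∈ {1,…,N} be square integrable with respect to μ, such that for each j, ∫_E F_{jk} · conj(F_{jl}) dμ = 0 whenever k ≠ l. Then perm(∫_E |F_{jk}|² dμ)_{j,k=1}^N = ∫_{E^N} |det(F_{jk}(x_j))_{j,k=1}^N|² dμ^{⊗N}(x₁,…,x_N). -/
/-!
Write `|det|² = det · conj det` and expand both determinants along rows: this is a double sum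
over pairs of permutations `(σ, τ)` of `± ∏ⱼ F_{j,σ j}(xⱼ) · conj F_{j,τ j}(xⱼ)`. Under the product
measure each such product integrates to `∏ⱼ ⟨F_{j,σ j}, F_{j,τ j}⟩`, and row-wise orthogonality
kills every term with `σ ≠ τ`, leaving `∑_σ ∏ⱼ ‖F_{j,σ j}‖² = perm (‖F_{jk}‖²)`.
-/

open MeasureTheory

noncomputable section

/-- The permanent of a matrix `A`, `perm A = ∑_σ ∏_j A j (σ j)`. -/
def perm {ι : Type*} [Fintype ι] [DecidableEq ι] (A : ι → ι → ℝ) : ℝ :=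
  ∑ σ : Equiv.Perm ι, ∏ j, A j (σ j)

open Finset Equiv ComplexConjugate

section

variable {ι : Type*} [Fintype ι] [DecidableEq ι]

theorem Matrix.det_eq_sum_sign_mul_prod_row {R : Type*} [CommRing R] (M : Matrix ι ι R) :
    M.det = ∑ σ : Perm ι, ((Perm.sign σ : ℤ) : R) * ∏ j, M j (σ j) := by
  rw [← Matrix.det_transpose, Matrix.det_apply']
  rfl

theorem Matrix.det_mul_star_det {R : Type*} [CommRing R] [StarRing R] (M : Matrix ι ι R) :
    M.det * star M.det = ∑ σ : Perm ι, ∑ τ : Perm ι,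
      ((Perm.sign σ : ℤ) : R) * ((Perm.sign τ : ℤ) : R) * ∏ j, M j (σ j) * star (M j (τ j)) := by
  simp only [M.det_eq_sum_sign_mul_prod_row, star_sum, star_mul', star_intCast, star_prod,
    sum_mul_sum, prod_mul_distrib]
  exact sum_congr rfl fun σ _ => sum_congr rfl fun τ _ => by ring

theorem sum_sign_mul_sign_mul_prod_eq_sum_prod_diag {R : Type*} [CommRing R]
    (G : ι → ι → ι → R) (hG : ∀ j k l, k ≠ l → G j k l = 0) :
    ∑ σ : Perm ι, ∑ τ : Perm ι,
      ((Perm.sign σ : ℤ) : R) * ((Perm.sign τ : ℤ) : R) * ∏ j, G j (σ j) (τ j) =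
      ∑ σ : Perm ι, ∏ j, G j (σ j) (σ j) := by
  refine sum_congr rfl fun σ _ => ?_
  rw [sum_eq_single_of_mem σ (mem_univ σ)]
  · rw [← Int.cast_mul, ← Units.val_mul, Int.units_mul_self, Units.val_one, Int.cast_one, one_mul]
  · intro τ _ hτ
    obtain ⟨j, hj⟩ : ∃ j, σ j ≠ τ j := by
      by_contra! h
      exact hτ (Perm.ext h).symm
    rw [prod_eq_zero (mem_univ j) (hG j (σ j) (τ j) hj), mul_zero]

variable {𝕜 : Type*} [RCLike 𝕜] {E : Type*} [MeasurableSpace E] {μ : Measure E}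

theorem integral_det_mul_star_det_pi [SigmaFinite μ] {F : ι → ι → E → 𝕜}
    (hF : ∀ j k, MemLp (F j k) 2 μ) :
    ∫ x, (Matrix.of fun j k => F j k (x j)).det * star (Matrix.of fun j k => F j k (x j)).det
        ∂(Measure.pi fun _ => μ) =
      ∑ σ : Perm ι, ∑ τ : Perm ι, ((Perm.sign σ : ℤ) : 𝕜) * ((Perm.sign τ : ℤ) : 𝕜) *
        ∏ j, ∫ t, F j (σ j) t * star (F j (τ j) t) ∂μ := by
  have hint (σ τ : Perm ι) : Integrable (fun x : ι → E =>
      ∏ j, F j (σ j) (x j) * star (F j (τ j) (x j))) (Measure.pi fun _ => μ) :=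
    Integrable.fintype_prod (f := fun j t => F j (σ j) t * star (F j (τ j) t))
      fun j => (hF j (σ j)).integrable_mul (hF j (τ j)).star
  simp_rw [Matrix.det_mul_star_det, Matrix.of_apply]
  rw [integral_finsetSum _ fun σ _ => integrable_finsetSum _ fun τ _ => (hint σ τ).const_mul _]
  refine sum_congr rfl fun σ _ => ?_
  rw [integral_finsetSum _ fun τ _ => (hint σ τ).const_mul _]
  refine sum_congr rfl fun τ _ => ?_
  rw [integral_const_mul,
    integral_fintype_prod_eq_prod (fun j t => F j (σ j) t * star (F j (τ j) t))]

theorem perm_integral_norm_sq_eq_integral_norm_sq_det [SigmaFinite μ] {F : ι → ι → E → 𝕜}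
    (hF : ∀ j k, MemLp (F j k) 2 μ)
    (horth : ∀ j k l, k ≠ l → ∫ t, F j k t * conj (F j l t) ∂μ = 0) :
    perm (fun j k => ∫ t, ‖F j k t‖ ^ 2 ∂μ) =
      ∫ x, ‖(Matrix.of fun j k => F j k (x j)).det‖ ^ 2 ∂(Measure.pi fun _ => μ) := by
  have norm_sq_eq (z : 𝕜) : ((‖z‖ ^ 2 : ℝ) : 𝕜) = z * star z := by
    rw [RCLike.star_def, RCLike.mul_conj, RCLike.ofReal_pow]
  apply RCLike.ofReal_injective (K := 𝕜)
  simp_rw [perm, RCLike.ofReal_sum, RCLike.ofReal_prod, ← integral_ofReal, norm_sq_eq,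
    integral_det_mul_star_det_pi hF]
  exact (sum_sign_mul_sign_mul_prod_eq_sum_prod_diag _ horth).symm

end

theorem statement13_general {E : Type*} [MeasurableSpace E] (μ : Measure E) [SigmaFinite μ]
    (N : ℕ) (F : Fin N → Fin N → E → ℂ)
    (hL2 : ∀ j k, MemLp (F j k) 2 μ)
    (horth : ∀ j k l, k ≠ l → ∫ t, F j k t * (starRingEnd ℂ) (F j l t) ∂μ = 0) :
    perm (fun j k => ∫ t, ‖F j k t‖ ^ 2 ∂μ) =
      ∫ x : Fin N → E, ‖Matrix.det (Matrix.of fun j k => F j k (x j))‖ ^ 2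
        ∂(Measure.pi fun _ : Fin N => μ) :=
  perm_integral_norm_sq_eq_integral_norm_sq_det hL2 horth

/-- For square-integrable functions `F_{jk}` that are rowwise orthogonal,
`perm(∫ |F_{jk}|² dμ) = ∫_{E^N} |det(F_{jk}(x_j))|² dμ^{⊗N}`. -/
theorem statement13 {E : Type*} [MeasurableSpace E] (μ : Measure E) [SigmaFinite μ]
    (N : ℕ) (hN : 1 ≤ N) (F : Fin N → Fin N → E → ℂ)
    (hmeas : ∀ j k, Measurable (F j k))
    (hL2 : ∀ j k, MemLp (F j k) 2 μ)
    (horth : ∀ j k l, k ≠ l → ∫ t, F j k t * (starRingEnd ℂ) (F j l t) ∂μ = 0) :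
    perm (fun j k => ∫ t, ‖F j k t‖ ^ 2 ∂μ) =
      ∫ x : Fin N → E, ‖Matrix.det (Matrix.of fun j k => F j k (x j))‖ ^ 2
        ∂(Measure.pi fun _ : Fin N => μ) :=
  statement13_general μ N F hL2 horth
end
end

section
/- Let N ≥ 1 and let (a_{jk})_{j,k=1}^N be an N×N matrix of non-negative real numbers. Then perm(a_{jk}) = (2π)^{−N} ∫_{[0,2π]^N} |det(√(a_{jk}) · e^{i·k·x_j})_{j,k=1}^N|² dx₁ ⋯ dx_N. -/
open MeasureTheory Real
open scoped ENNReal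

noncomputable section

/-!
Expanding the determinant along permutations exhibits `det(√a_{jk} e^{i k x_j})` as the
trigonometric polynomial `∑_σ sgn σ (∏_j √a_{jσ(j)}) e^{i ∑_j (σ(j)+1) x_j}`, whose frequency
vectors `(σ(j)+1)_j` are pairwise distinct. The characters `x ↦ e^{i ⟨m, x⟩}` are orthogonal on
`[0, 2π]^N`, so by Parseval the mean of its squared modulus is the sum of the squared moduli of
its coefficients, `∑_σ ∏_j a_{jσ(j)} = perm a`.
-/

open Complex (I)
open ComplexConjugate

variable {ι : Type*} [Fintype ι]

def periodCube (ι : Type*) : Set (ι → ℝ) :=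
  Set.univ.pi fun _ => Set.Icc 0 (2 * π)

def fourierMonomial (m : ι → ℤ) (x : ι → ℝ) : ℂ :=
  ∏ j, Complex.exp (I * m j * x j)

lemma continuous_fourierMonomial (m : ι → ℤ) : Continuous (fourierMonomial m) := by
  unfold fourierMonomial
  fun_prop

lemma fourierMonomial_mul_conj (m m' : ι → ℤ) (x : ι → ℝ) :
    fourierMonomial m x * conj (fourierMonomial m' x) = fourierMonomial (m - m') x := by
  simp only [fourierMonomial, map_prod, ← Complex.exp_conj, ← Finset.prod_mul_distrib,
    ← Complex.exp_add]
  refine Finset.prod_congr rfl fun j _ => congrArg Complex.exp ?_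
  simp only [map_mul, Complex.conj_I, map_intCast, Complex.conj_ofReal, Pi.sub_apply,
    Int.cast_sub]
  ring

lemma integral_exp_int_mul_Icc (m : ℤ) :
    ∫ t in Set.Icc (0 : ℝ) (2 * π), Complex.exp (I * m * t) =
      if m = 0 then ((2 * π : ℝ) : ℂ) else 0 := by
  rw [integral_Icc_eq_integral_Ioc, ← intervalIntegral.integral_of_le (by positivity)]
  split_ifs with hm
  · simp [hm]
  · have hc : I * m ≠ 0 := by simp [Complex.I_ne_zero, hm]
    rw [integral_exp_mul_complex hc,
      show I * m * ((2 * π : ℝ) : ℂ) = m * (2 * π * I) by push_cast; ring,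
      Complex.exp_int_mul_two_pi_mul_I]
    simp

lemma setIntegral_univ_pi_prod {𝕜 : Type*} [RCLike 𝕜] {E : ι → Type*}
    [∀ i, MeasureSpace (E i)] [∀ i, SigmaFinite (volume : Measure (E i))]
    (s : ∀ i, Set (E i)) (f : ∀ i, E i → 𝕜) :
    ∫ x in Set.univ.pi s, ∏ i, f i (x i) = ∏ i, ∫ t in s i, f i t := by
  rw [volume_pi, Measure.restrict_pi_pi, integral_fintype_prod_eq_prod]

lemma integral_fourierMonomial (m : ι → ℤ) :
    ∫ x in periodCube ι, fourierMonomial m x =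
      if m = 0 then (((2 * π) ^ Fintype.card ι : ℝ) : ℂ) else 0 := by
  unfold fourierMonomial
  rw [periodCube, setIntegral_univ_pi_prod _ fun j (t : ℝ) => Complex.exp (I * m j * t)]
  simp only [integral_exp_int_mul_Icc]
  split_ifs with hm
  · simp [hm]
  · obtain ⟨j, hj⟩ := Function.ne_iff.mp hm
    exact Finset.prod_eq_zero (Finset.mem_univ j) (if_neg hj)

theorem integral_norm_sq_sum_fourierMonomial {α : Type*} [Fintype α] (c : α → ℂ)
    {m : α → ι → ℤ} (hm : Function.Injective m) :
    ∫ x in periodCube ι,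
        ‖∑ s, c s * fourierMonomial (m s) x‖ ^ 2 =
      (2 * π) ^ Fintype.card ι * ∑ s, ‖c s‖ ^ 2 := by
  apply Complex.ofReal_injective
  rw [← integral_complex_ofReal]
  calc ∫ x in periodCube ι,
          ((‖∑ s, c s * fourierMonomial (m s) x‖ ^ 2 : ℝ) : ℂ)
      = ∫ x in periodCube ι,
          ∑ s, ∑ t, c s * conj (c t) * fourierMonomial (m s - m t) x := by
        refine integral_congr_ae (Filter.Eventually.of_forall fun x => ?_)
        simp only [Complex.ofReal_pow, ← Complex.mul_conj', map_sum, Finset.sum_mul_sum, map_mul,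
          ← fourierMonomial_mul_conj]
        exact Finset.sum_congr rfl fun s _ => Finset.sum_congr rfl fun t _ => by ring
    _ = ∑ s, ∑ t, c s * conj (c t) *
          ∫ x in periodCube ι, fourierMonomial (m s - m t) x := by
        have hint (s t) : IntegrableOn
            (fun x => c s * conj (c t) * fourierMonomial (m s - m t) x) (periodCube ι) :=
          (continuous_const.mul (continuous_fourierMonomial _)).continuousOn.integrableOn_compact
            (isCompact_univ_pi fun _ => isCompact_Icc)
        rw [integral_finsetSum _ fun s _ => integrable_finsetSum _ fun t _ => hint s t]
        refine Finset.sum_congr rfl fun s _ => ?_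
        rw [integral_finsetSum _ fun t _ => hint s t]
        exact Finset.sum_congr rfl fun t _ => integral_const_mul _ _
    _ = ∑ s, c s * conj (c s) * (((2 * π) ^ Fintype.card ι : ℝ) : ℂ) := by
        refine Finset.sum_congr rfl fun s _ => ?_
        simp_rw [integral_fourierMonomial, sub_eq_zero]
        rw [Finset.sum_eq_single s
          (fun t _ hts => by rw [if_neg fun h => hts (hm h).symm, mul_zero]) (by simp), if_pos rfl]
    _ = _ := by
        simp only [Complex.mul_conj', ← Finset.sum_mul]
        push_cast
        ring

lemma det_mul_exp_eq_sum_fourierMonomial [DecidableEq ι] (b : ι → ι → ℂ) (n : ι → ℤ)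
    (x : ι → ℝ) :
    (Matrix.of fun j k => b j k * Complex.exp (I * n k * x j)).det =
      ∑ σ : Equiv.Perm ι, ((Equiv.Perm.sign σ : ℤ) * ∏ j, b j (σ j)) *
        fourierMonomial (n ∘ σ) x := by
  rw [← Matrix.det_transpose, Matrix.det_apply']
  refine Finset.sum_congr rfl fun σ _ => ?_
  simp [fourierMonomial, Finset.prod_mul_distrib, mul_assoc]

theorem integral_norm_sq_det_mul_exp [DecidableEq ι] (b : ι → ι → ℂ) {n : ι → ℤ}
    (hn : Function.Injective n) :
    ∫ x in periodCube ι,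
        ‖(Matrix.of fun j k => b j k * Complex.exp (I * n k * x j)).det‖ ^ 2 =
      (2 * π) ^ Fintype.card ι * ∑ σ : Equiv.Perm ι, ∏ j, ‖b j (σ j)‖ ^ 2 := by
  simp_rw [det_mul_exp_eq_sum_fourierMonomial]
  have hfreq : Function.Injective fun σ : Equiv.Perm ι => n ∘ σ :=
    fun σ τ h => Equiv.ext fun j => hn (congrFun h j)
  rw [integral_norm_sq_sum_fourierMonomial _ hfreq]
  refine congrArg _ (Finset.sum_congr rfl fun σ _ => ?_)
  rcases Int.units_eq_one_or (Equiv.Perm.sign σ) with h | h <;> simp [h, Finset.prod_pow]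

theorem statement15_general (N : ℕ) (a : Fin N → Fin N → ℝ)
    (ha : ∀ j k, 0 ≤ a j k) :
    perm a =
      ((2 * π) ^ N)⁻¹ *
        ∫ x : Fin N → ℝ in Set.univ.pi fun _ : Fin N => Set.Icc (0:ℝ) (2 * π),
          ‖Matrix.det (Matrix.of fun j k =>
            (Real.sqrt (a j k) : ℂ) *
              Complex.exp (Complex.I * (((k : ℕ) + 1 : ℕ) : ℂ) * (x j : ℂ)))‖ ^ 2 := by
  have hfreq : Function.Injective fun k : Fin N => (((k : ℕ) + 1 : ℕ) : ℤ) :=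
    fun k l h => Fin.ext (by simpa using h)
  have key := integral_norm_sq_det_mul_exp (fun j k => (Real.sqrt (a j k) : ℂ)) hfreq
  simp only [periodCube, Int.cast_natCast, Fintype.card_fin] at key
  rw [key, inv_mul_cancel_left₀ (by positivity), perm]
  refine Finset.sum_congr rfl fun σ _ => Finset.prod_congr rfl fun j _ => ?_
  rw [Complex.norm_real, Real.norm_of_nonneg (Real.sqrt_nonneg _), Real.sq_sqrt (ha j (σ j))]

/-- For a matrix of nonnegative reals,
`perm(a_{jk}) = (2π)^{-N} ∫_{[0,2π]^N} |det(√(a_{jk}) e^{i k x_j})|² dx`. -/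
theorem statement15 (N : ℕ) (hN : 1 ≤ N) (a : Fin N → Fin N → ℝ)
    (ha : ∀ j k, 0 ≤ a j k) :
    perm a =
      ((2 * π) ^ N)⁻¹ *
        ∫ x : Fin N → ℝ in Set.univ.pi fun _ : Fin N => Set.Icc (0:ℝ) (2 * π),
          ‖Matrix.det (Matrix.of fun j k =>
            (Real.sqrt (a j k) : ℂ) *
              Complex.exp (Complex.I * (((k : ℕ) + 1 : ℕ) : ℂ) * (x j : ℂ)))‖ ^ 2 :=
  statement15_general N a ha
end
end
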